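/- Let A be a Banach algebra, and let X, Y be right Banach A-modules with X relatively injective (there is a contractive A-module map Φ⁺ : B(A⁺, X) → X with Φ⁺∘Δ⁺ = id_X). If Y is a right Banach A-module containing X as a closed submodule and there exists a contractive projection (not necessarily a module map) from Y onto X, combined with X being a 1-injective Banach space, then there exists a contractive A-module projection from any containing module Z onto X extending any contractive module map into X; in particular relative 1-injectivity plus 1-injectivity as a Banach space implies 1-injectivity as a Banach A-module. -/

import Mathlib

universe u

variable {A : Type*}

/-- The multiplication of the unitization `A⁺ = A ⊕₁ ℂ`, realized on `A × ℂ`. -/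
def umul [NonUnitalNormedRing A] [NormedSpace ℂ A] (x y : A × ℂ) : A × ℂ :=
  (x.1 * y.1 + x.2 • y.1 + y.2 • x.1, x.2 * y.2)

/-- The unitization `A⁺` with its ℓ¹-norm. -/
abbrev Aplus (A : Type*) [NonUnitalNormedRing A] := WithLp 1 (A × ℂ)

/-- A right Banach `A`-module structure on a Banach space `Y`: a bilinear,
associative, contractive action. -/
structure BanachRightModule (A : Type*) (Y : Type*) [NonUnitalNormedRing A]
    [NormedSpace ℂ A] [NormedAddCommGroup Y] [NormedSpace ℂ Y] where
  act : Y →ₗ[ℂ] A →ₗ[ℂ] Y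
  assoc : ∀ (y : Y) (a b : A), act (act y a) b = act y (a * b)
  bound : ∀ (y : Y) (a : A), ‖act y a‖ ≤ ‖y‖ * ‖a‖

/-!
Extend `T` to a bounded map `S : Z → X` with `‖S‖ ≤ ‖T‖` using only that `X` is 1-injective as
a Banach space, and average it into a module map with the relative-injectivity retraction:
`T' z = Φ⁺ (S ∘ Δ⁺ z)`. Since `Δ⁺ (z·a) = Δ⁺ z ∘ (a · -)` and `Φ⁺` is a module map, `T'` is a
module map; on `j y` the module maps `j` and `T` give `S ∘ Δ⁺ (j y) = Δ⁺ (T y)`, which `Φ⁺` sends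
back to `T y`; and `‖T'‖ ≤ ‖Φ⁺‖ ‖S‖ ‖Δ⁺‖ ≤ ‖T‖`.
-/

theorem Aplus.norm_eq [NonUnitalNormedRing A] (u : Aplus A) :
    ‖u‖ = ‖(WithLp.equiv 1 (A × ℂ) u).1‖ + ‖(WithLp.equiv 1 (A × ℂ) u).2‖ := by
  rw [WithLp.prod_norm_eq_add (by norm_num)]
  norm_num

namespace BanachRightModule

variable [NonUnitalNormedRing A] [NormedSpace ℂ A]
  {Y Z : Type*} [NormedAddCommGroup Y] [NormedSpace ℂ Y] [NormedAddCommGroup Z] [NormedSpace ℂ Z]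

/-- The canonical embedding `Δ⁺ : Z → B(A⁺, Z)`, `Δ⁺ z u = z·u`. -/
noncomputable def orbit (MZ : BanachRightModule A Z) : Z →L[ℂ] Aplus A →L[ℂ] Z :=
  LinearMap.mkContinuous₂
    (LinearMap.mk₂ ℂ
      (fun z u => MZ.act z (WithLp.equiv 1 (A × ℂ) u).1 + (WithLp.equiv 1 (A × ℂ) u).2 • z)
      (fun z z' u => by simp only [map_add, LinearMap.add_apply, smul_add]; abel)
      (fun c z u => by simp only [map_smul, LinearMap.smul_apply, smul_add, smul_comm c])
      (fun z u v => by
        simp only [WithLp.equiv_apply, WithLp.ofLp_add, Prod.fst_add, Prod.snd_add, map_add,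
          add_smul]
        abel)
      (fun c z u => by
        simp only [WithLp.equiv_apply, WithLp.ofLp_smul, Prod.smul_fst, Prod.smul_snd, map_smul,
          smul_add, smul_eq_mul, mul_smul]))
    1 (fun z u => by
      calc ‖MZ.act z (WithLp.equiv 1 (A × ℂ) u).1 + (WithLp.equiv 1 (A × ℂ) u).2 • z‖
          ≤ ‖z‖ * ‖(WithLp.equiv 1 (A × ℂ) u).1‖ + ‖(WithLp.equiv 1 (A × ℂ) u).2‖ * ‖z‖ :=
            (norm_add_le _ _).trans (add_le_add (MZ.bound _ _) (norm_smul _ _).le)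
        _ = 1 * ‖z‖ * ‖u‖ := by rw [Aplus.norm_eq]; ring)

theorem orbit_apply (MZ : BanachRightModule A Z) (z : Z) (u : Aplus A) :
    MZ.orbit z u =
      MZ.act z (WithLp.equiv 1 (A × ℂ) u).1 + (WithLp.equiv 1 (A × ℂ) u).2 • z :=
  rfl

theorem norm_orbit_apply_le (MZ : BanachRightModule A Z) (z : Z) : ‖MZ.orbit z‖ ≤ ‖z‖ :=
  (MZ.orbit.le_of_opNorm_le (LinearMap.mkContinuous₂_norm_le _ zero_le_one _) z).trans_eq
    (one_mul _)

theorem orbit_act (MZ : BanachRightModule A Z) (z : Z) (a : A) (u : Aplus A) :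
    MZ.orbit (MZ.act z a) u =
      MZ.orbit z ((WithLp.equiv 1 (A × ℂ)).symm (umul (a, 0) (WithLp.equiv 1 (A × ℂ) u))) := by
  simp only [orbit_apply, Equiv.apply_symm_apply, umul, MZ.assoc, map_add, map_smul, zero_mul,
    zero_smul, add_zero]

theorem orbit_map {MY : BanachRightModule A Y} {MZ : BanachRightModule A Z} (f : Y →L[ℂ] Z)
    (hf : ∀ (y : Y) (a : A), f (MY.act y a) = MZ.act (f y) a) (y : Y) :
    MZ.orbit (f y) = f.comp (MY.orbit y) := by
  ext u
  simp only [ContinuousLinearMap.comp_apply, orbit_apply, map_add, map_smul, hf]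

end BanachRightModule

open BanachRightModule

theorem one_injective_module_of_relatively_injective_general
    [NonUnitalNormedRing A] [NormedSpace ℂ A]
    (X : Type u) [NormedAddCommGroup X] [NormedSpace ℂ X]
    (MX : BanachRightModule A X)
    -- relative 1-injectivity of `X`:
    (hrel : ∃ Φp : (Aplus A →L[ℂ] X) →L[ℂ] X,
      ‖Φp‖ ≤ 1 ∧
      (∀ (Ψ Ψ' : Aplus A →L[ℂ] X) (a : A),
        (∀ u : Aplus A, Ψ' u =
            Ψ ((WithLp.equiv 1 (A × ℂ)).symm
              (umul (a, 0) (WithLp.equiv 1 (A × ℂ) u)))) →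
        Φp Ψ' = MX.act (Φp Ψ) a) ∧
      (∀ (x : X) (D : Aplus A →L[ℂ] X),
        (∀ u : Aplus A, D u =
            MX.act x (WithLp.equiv 1 (A × ℂ) u).1 + (WithLp.equiv 1 (A × ℂ) u).2 • x) →
        Φp D = x))
    -- 1-injectivity of `X` as a Banach space:
    (hinj : ∀ (Y Z : Type u) [NormedAddCommGroup Y] [NormedSpace ℂ Y] [CompleteSpace Y]
      [NormedAddCommGroup Z] [NormedSpace ℂ Z] [CompleteSpace Z]
      (j : Y →L[ℂ] Z), (∀ y, ‖j y‖ = ‖y‖) →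
      ∀ T : Y →L[ℂ] X, ∃ T' : Z →L[ℂ] X, (∀ y, T' (j y) = T y) ∧ ‖T'‖ ≤ ‖T‖) :
    -- conclusion: 1-injectivity of `X` as a Banach `A`-module
    ∀ (Y Z : Type u) [NormedAddCommGroup Y] [NormedSpace ℂ Y] [CompleteSpace Y]
      [NormedAddCommGroup Z] [NormedSpace ℂ Z] [CompleteSpace Z]
      (MY : BanachRightModule A Y) (MZ : BanachRightModule A Z)
      (j : Y →L[ℂ] Z), (∀ y, ‖j y‖ = ‖y‖) →
      (∀ (y : Y) (a : A), j (MY.act y a) = MZ.act (j y) a) →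
      ∀ T : Y →L[ℂ] X, (∀ (y : Y) (a : A), T (MY.act y a) = MX.act (T y) a) →
      ∃ T' : Z →L[ℂ] X, (∀ y, T' (j y) = T y) ∧ ‖T'‖ ≤ ‖T‖ ∧
        (∀ (z : Z) (a : A), T' (MZ.act z a) = MX.act (T' z) a) := by
  obtain ⟨Φp, hΦp_norm, hΦp_act, hΦp_orbit⟩ := hrel
  intro Y Z _ _ _ _ _ _ MY MZ j hj hj_act T hT_act
  obtain ⟨S, hS_ext, hS_norm⟩ := hinj Y Z j hj T
  let T' : Z →L[ℂ] X := Φp.comp ((ContinuousLinearMap.compL ℂ (Aplus A) Z X S).comp MZ.orbit)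
  refine ⟨T', fun y => ?_, ?_, fun z a => ?_⟩
  · have hSj : S.comp j = T := ContinuousLinearMap.ext hS_ext
    have hS_orbit : S.comp (MZ.orbit (j y)) = MX.orbit (T y) := by
      rw [orbit_map j hj_act, ← ContinuousLinearMap.comp_assoc, hSj, orbit_map T hT_act]
    show Φp (S.comp (MZ.orbit (j y))) = T y
    rw [hS_orbit]
    exact hΦp_orbit _ _ (orbit_apply MX (T y))
  · refine T'.opNorm_le_bound (norm_nonneg T) fun z => ?_
    calc ‖Φp (S.comp (MZ.orbit z))‖ ≤ ‖S.comp (MZ.orbit z)‖ :=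
          (Φp.le_of_opNorm_le hΦp_norm _).trans_eq (one_mul _)
      _ ≤ ‖S‖ * ‖MZ.orbit z‖ := S.opNorm_comp_le _
      _ ≤ ‖T‖ * ‖z‖ := by gcongr; exact norm_orbit_apply_le MZ z
  · exact hΦp_act _ _ a fun u => congrArg S (orbit_act MZ z a u)

/-- if a right Banach `A`-module `X` is relatively 1-injective
(the canonical embedding `Δ⁺ : X → B(A⁺, X)` admits a contractive `A`-module left
inverse) and `X` is 1-injective as a Banach space, then `X` is 1-injective as a
Banach `A`-module: every contractive module map into `X` extends, with the same
norm, along any isometric module inclusion. -/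
theorem one_injective_module_of_relatively_injective
    [NonUnitalNormedRing A] [NormedSpace ℂ A] [IsScalarTower ℂ A A]
    [SMulCommClass ℂ A A] [CompleteSpace A]
    (X : Type u) [NormedAddCommGroup X] [NormedSpace ℂ X] [CompleteSpace X]
    (MX : BanachRightModule A X)
    -- relative 1-injectivity of `X`:
    (hrel : ∃ Φp : (Aplus A →L[ℂ] X) →L[ℂ] X,
      ‖Φp‖ ≤ 1 ∧
      (∀ (Ψ Ψ' : Aplus A →L[ℂ] X) (a : A),
        (∀ u : Aplus A, Ψ' u =
            Ψ ((WithLp.equiv 1 (A × ℂ)).symm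
              (umul (a, 0) (WithLp.equiv 1 (A × ℂ) u)))) →
        Φp Ψ' = MX.act (Φp Ψ) a) ∧
      (∀ (x : X) (D : Aplus A →L[ℂ] X),
        (∀ u : Aplus A, D u =
            MX.act x (WithLp.equiv 1 (A × ℂ) u).1 + (WithLp.equiv 1 (A × ℂ) u).2 • x) →
        Φp D = x))
    -- 1-injectivity of `X` as a Banach space:
    (hinj : ∀ (Y Z : Type u) [NormedAddCommGroup Y] [NormedSpace ℂ Y] [CompleteSpace Y]
      [NormedAddCommGroup Z] [NormedSpace ℂ Z] [CompleteSpace Z]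
      (j : Y →L[ℂ] Z), (∀ y, ‖j y‖ = ‖y‖) →
      ∀ T : Y →L[ℂ] X, ∃ T' : Z →L[ℂ] X, (∀ y, T' (j y) = T y) ∧ ‖T'‖ ≤ ‖T‖) :
    -- conclusion: 1-injectivity of `X` as a Banach `A`-module
    ∀ (Y Z : Type u) [NormedAddCommGroup Y] [NormedSpace ℂ Y] [CompleteSpace Y]
      [NormedAddCommGroup Z] [NormedSpace ℂ Z] [CompleteSpace Z]
      (MY : BanachRightModule A Y) (MZ : BanachRightModule A Z)
      (j : Y →L[ℂ] Z), (∀ y, ‖j y‖ = ‖y‖) →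
      (∀ (y : Y) (a : A), j (MY.act y a) = MZ.act (j y) a) →
      ∀ T : Y →L[ℂ] X, (∀ (y : Y) (a : A), T (MY.act y a) = MX.act (T y) a) →
      ∃ T' : Z →L[ℂ] X, (∀ y, T' (j y) = T y) ∧ ‖T'‖ ≤ ‖T‖ ∧
        (∀ (z : Z) (a : A), T' (MZ.act z a) = MX.act (T' z) a) :=
  one_injective_module_of_relatively_injective_general X MX hrel hinj
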